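/- Let n ≥ 4, ρ = exp(2πi/n), and let Γ₀,…,Γ_{n−1} ∈ ℝ be nonzero. Suppose the configuration of n vortices at positions z_k = ρᵏ (0 ≤ k ≤ n−1) with vorticities Γ_k is a relative equilibrium with angular velocity ω ∈ ℝ. Then all the vorticities are equal: Γ₀ = Γ₁ = ⋯ = Γ_{n−1}; moreover the total vorticity ∑_{k=0}^{n−1} Γ_k and the angular velocity ω are nonzero. -/

import Mathlib

open Finset

private noncomputable def Bsum (n : ℕ) (ρ : ℂ) (q : ℕ) : ℂ :=
  ∑ m ∈ Finset.Ico 1 n, ρ ^ (m * q) / (ρ ^ m - 1)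

private lemma orth_sum {n : ℕ} {ρ : ℂ} (hprim : IsPrimitiveRoot ρ n) (q : ℕ) :
    ∑ k ∈ Finset.range n, ρ ^ (k * q) = if n ∣ q then (n : ℂ) else 0 := by
  have hρn : ρ ^ n = 1 := hprim.pow_eq_one
  by_cases h : n ∣ q
  · simp only [if_pos h]
    obtain ⟨c, rfl⟩ := h
    have h1 : ∀ k, ρ ^ (k * (n * c)) = 1 := by
      intro k
      rw [show k * (n * c) = n * (k * c) by ring, pow_mul, hρn, one_pow]
    simp [h1]
  · simp only [if_neg h]
    have hne : ρ ^ q - 1 ≠ 0 := sub_ne_zero.mpr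
      (fun hq => h ((hprim.pow_eq_one_iff_dvd q).mp hq))
    have hgeom := geom_sum_mul (ρ ^ q) n
    have hzn : (ρ ^ q) ^ n - 1 = 0 := by
      rw [← pow_mul, mul_comm, pow_mul, hρn, one_pow, sub_self]
    have hs : (∑ i ∈ Finset.range n, (ρ ^ q) ^ i) = 0 := by
      rcases mul_eq_zero.mp (hgeom.trans hzn) with h' | h'
      · exact h'
      · exact absurd h' hne
    calc ∑ k ∈ Finset.range n, ρ ^ (k * q) = ∑ k ∈ Finset.range n, (ρ ^ q) ^ k := by
          refine Finset.sum_congr rfl fun k _ => ?_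
          rw [← pow_mul, mul_comm]
      _ = 0 := hs

private lemma sum_shift {n : ℕ} (F : ℕ → ℂ) (hF : ∀ j, F (j + n) = F j) (m : ℕ) :
    ∑ k ∈ Finset.range n, F (k + m) = ∑ k ∈ Finset.range n, F k := by
  induction m with
  | zero => simp
  | succ m ih =>
    have h1 : ∑ k ∈ Finset.range n, F (k + (m + 1)) =
        ∑ k ∈ Finset.range n, F ((k + 1) + m) := by
      refine Finset.sum_congr rfl fun k _ => ?_
      congr 1; omega
    have h2 : ∑ k ∈ Finset.range (n + 1), F (k + m) =
        ∑ k ∈ Finset.range n, F ((k + 1) + m) + F (0 + m) := Finset.sum_range_succ' _ _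
    have h3 : ∑ k ∈ Finset.range (n + 1), F (k + m) =
        ∑ k ∈ Finset.range n, F (k + m) + F (n + m) := Finset.sum_range_succ _ _
    have h4 : F (n + m) = F (0 + m) := by
      rw [show n + m = 0 + m + n by omega, hF]
    have := h2.symm.trans h3
    rw [h4] at this
    have h5 : ∑ k ∈ Finset.range n, F ((k + 1) + m) = ∑ k ∈ Finset.range n, F (k + m) :=
      add_right_cancel this
    rw [h1, h5, ih]

private lemma Bsum_zero {n : ℕ} {ρ : ℂ} (hprim : IsPrimitiveRoot ρ n) (hn : 2 ≤ n) :
    Bsum n ρ 0 = -((n : ℂ) - 1) / 2 := by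
  have hρn : ρ ^ n = 1 := hprim.pow_eq_one
  have hne : ∀ m, 1 ≤ m → m < n → ρ ^ m - 1 ≠ 0 := fun m h1 h2 =>
    sub_ne_zero.mpr (hprim.pow_ne_one_of_pos_of_lt (by omega) h2)
  have hB : Bsum n ρ 0 = ∑ m ∈ Finset.Ico 1 n, 1 / (ρ ^ m - 1) := by
    unfold Bsum
    refine Finset.sum_congr rfl fun m _ => ?_
    rw [Nat.mul_zero, pow_zero]
  have hrev : ∑ m ∈ Finset.Ico 1 n, (1 : ℂ) / (ρ ^ m - 1) =
      ∑ m ∈ Finset.Ico 1 n, 1 / (ρ ^ (n - m) - 1) := by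
    refine Finset.sum_nbij' (fun m => n - m) (fun m => n - m) ?_ ?_ ?_ ?_ ?_
    · intro a ha; simp only [Finset.mem_Ico] at *; omega
    · intro a ha; simp only [Finset.mem_Ico] at *; omega
    · intro a ha; simp only [Finset.mem_Ico] at ha; omega
    · intro a ha; simp only [Finset.mem_Ico] at ha; omega
    · intro a ha; simp only [Finset.mem_Ico] at ha
      rw [show n - (n - a) = a by omega]
  have hpair : ∀ m, 1 ≤ m → m < n →
      (1 : ℂ) / (ρ ^ m - 1) + 1 / (ρ ^ (n - m) - 1) = -1 := by
    intro m h1 h2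
    have ha : ρ ^ m - 1 ≠ 0 := hne m h1 h2
    have hb : ρ ^ (n - m) - 1 ≠ 0 := hne (n - m) (by omega) (by omega)
    have hab : ρ ^ m * ρ ^ (n - m) = 1 := by
      rw [← pow_add, Nat.add_sub_cancel' (le_of_lt h2), hρn]
    field_simp
    linear_combination hab
  have h2B : (2 : ℂ) * Bsum n ρ 0 = -((n : ℂ) - 1) := by
    have h' : (2 : ℂ) * Bsum n ρ 0 =
        ∑ m ∈ Finset.Ico 1 n, ((1 : ℂ) / (ρ ^ m - 1) + 1 / (ρ ^ (n - m) - 1)) := by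
      rw [Finset.sum_add_distrib, ← hrev, hB]; ring
    rw [h']
    have hc : ∑ m ∈ Finset.Ico 1 n, ((1 : ℂ) / (ρ ^ m - 1) + 1 / (ρ ^ (n - m) - 1)) =
        ∑ m ∈ Finset.Ico 1 n, (-1 : ℂ) := by
      refine Finset.sum_congr rfl fun m hm => ?_
      simp only [Finset.mem_Ico] at hm
      exact hpair m hm.1 hm.2
    rw [hc, Finset.sum_const, Nat.card_Ico]
    simp
    push_cast [Nat.cast_sub (by omega : 1 ≤ n)]
    ring
  linear_combination h2B / 2

private lemma Bsum_step {n : ℕ} {ρ : ℂ} (hprim : IsPrimitiveRoot ρ n) (hn : 2 ≤ n) (q : ℕ) :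
    Bsum n ρ (q + 1) = Bsum n ρ q + ((if n ∣ q then (n : ℂ) else 0) - 1) := by
  have hne : ∀ m, 1 ≤ m → m < n → ρ ^ m - 1 ≠ 0 := fun m h1 h2 =>
    sub_ne_zero.mpr (hprim.pow_ne_one_of_pos_of_lt (by omega) h2)
  have h1 : Bsum n ρ (q + 1) = Bsum n ρ q + ∑ m ∈ Finset.Ico 1 n, ρ ^ (m * q) := by
    unfold Bsum
    rw [← Finset.sum_add_distrib]
    refine Finset.sum_congr rfl fun m hm => ?_
    simp only [Finset.mem_Ico] at hm
    have hd := hne m hm.1 hm.2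
    field_simp
    rw [show m * (q + 1) = m * q + m by ring, pow_add]
    ring
  have h2 : ∑ m ∈ Finset.Ico 1 n, ρ ^ (m * q) = (if n ∣ q then (n : ℂ) else 0) - 1 := by
    have := orth_sum hprim q
    rw [Finset.range_eq_Ico, Finset.sum_eq_sum_Ico_succ_bot (by omega : 0 < n)] at this
    simp only [Nat.zero_mul, pow_zero] at this
    linear_combination this
  rw [h1, h2]

private lemma Bsum_val {n : ℕ} {ρ : ℂ} (hprim : IsPrimitiveRoot ρ n) (hn : 2 ≤ n) :
    ∀ q, 1 ≤ q → q ≤ n → Bsum n ρ q = ((n : ℂ) + 1) / 2 - q := by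
  intro q
  induction q with
  | zero => omega
  | succ q ih =>
    intro _ hq
    rcases Nat.eq_zero_or_pos q with h0 | hpos
    · subst h0
      rw [Bsum_step hprim hn 0, Bsum_zero hprim hn, if_pos (dvd_zero n)]
      push_cast
      ring
    · have hdvd : ¬ n ∣ q := by
        intro h
        have := Nat.le_of_dvd hpos h
        omega
      rw [Bsum_step hprim hn q, if_neg hdvd, ih hpos (by omega)]
      push_cast
      ring

theorem regular_polygon_relative_equilibrium_equal_vorticities
    (n : ℕ) (hn : 4 ≤ n)
    (ρ : ℂ) (hρ : ρ = Complex.exp (2 * Real.pi * Complex.I / n))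
    (Γ : Fin n → ℝ) (hΓ : ∀ k, Γ k ≠ 0)
    (z : Fin n → ℂ) (hz : ∀ k, z k = ρ ^ (k : ℕ))
    (v : Fin n → ℂ)
    (hv : ∀ k, v k = Complex.I *
      ∑ l ∈ univ \ {k}, (Γ l : ℂ) / (starRingEnd ℂ (z k) - starRingEnd ℂ (z l)))
    (ω : ℝ)
    (hre : ∀ k l, v l - v k = Complex.I * (ω : ℂ) * (z l - z k)) :
    (∀ k l, Γ k = Γ l) ∧ (∑ k, Γ k) ≠ 0 ∧ ω ≠ 0 := by
  have hn0 : n ≠ 0 := by omega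
  have hpos : 0 < n := by omega
  haveI : NeZero n := ⟨hn0⟩
  have hprim : IsPrimitiveRoot ρ n := hρ ▸ Complex.isPrimitiveRoot_exp n hn0
  have hρn : ρ ^ n = 1 := hprim.pow_eq_one
  have hρ0 : ρ ≠ 0 := by
    intro h
    rw [h, zero_pow hn0] at hρn
    exact zero_ne_one hρn
  have hne1 : ∀ m, 1 ≤ m → m < n → ρ ^ m - 1 ≠ 0 := fun m h1 h2 =>
    sub_ne_zero.mpr (hprim.pow_ne_one_of_pos_of_lt (by omega) h2)
  have hpow_mod : ∀ j : ℕ, ρ ^ (j % n) = ρ ^ j := by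
    intro j
    conv_rhs => rw [← Nat.mod_add_div j n]
    rw [pow_add, pow_mul, hρn, one_pow, mul_one]
  have hmul1 : ∀ a b : ℕ, n ∣ (a + b) → ρ ^ a * ρ ^ b = 1 := by
    intro a b h
    obtain ⟨c, hc⟩ := h
    rw [← pow_add, hc, pow_mul, hρn, one_pow]
  have hone : ∀ a : ℕ, ρ ^ (n * a) = 1 := by
    intro a
    rw [pow_mul, hρn, one_pow]
  have hnorm : ‖ρ‖ = 1 := by
    rw [hρ, show (2 * (Real.pi : ℂ) * Complex.I / n) =
      ((2 * Real.pi / n : ℝ) : ℂ) * Complex.I by push_cast; ring]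
    exact Complex.norm_exp_ofReal_mul_I _
  have hconj : ∀ j : ℕ, starRingEnd ℂ (ρ ^ j) = (ρ ^ j)⁻¹ := by
    intro j
    rw [map_pow, ← inv_pow]
    congr 1
    exact (Complex.inv_eq_conj hnorm).symm
  set G : ℕ → ℝ := fun j => Γ ⟨j % n, Nat.mod_lt j hpos⟩ with hGdef
  have hGper : ∀ j, G (j + n) = G j := by
    intro j
    exact congrArg Γ (Fin.ext (Nat.add_mod_right j n))
  have hGΓ : ∀ k : Fin n, G (k : ℕ) = Γ k :=
    fun k => congrArg Γ (Fin.ext (Nat.mod_eq_of_lt k.isLt))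
  set S : ℕ → ℂ := fun k => ∑ m ∈ Finset.Ico 1 n, (G (k + m) : ℂ) * (ρ ^ m / (ρ ^ m - 1))
    with hSdef
  set gam : ℕ → ℂ := fun p => ∑ j ∈ Finset.range n, (G j : ℂ) * ρ ^ (j * p) with hgamdef
  -- Step 1: velocity formula
  have hvS : ∀ k : Fin n, v k = Complex.I * (ρ ^ (k : ℕ) * S (k : ℕ)) := by
    intro k
    rw [hv k]
    congr 1
    rw [hSdef]
    simp only []
    rw [Finset.mul_sum]
    refine Finset.sum_nbij' (fun l : Fin n => ((l - k : Fin n) : ℕ))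
      (fun m : ℕ => k + (⟨m % n, Nat.mod_lt m hpos⟩ : Fin n)) ?_ ?_ ?_ ?_ ?_
    · intro l hl
      simp only [Finset.mem_sdiff, Finset.mem_univ, Finset.mem_singleton] at hl
      simp only [Finset.mem_Ico]
      have h0 : l - k ≠ 0 := sub_ne_zero.mpr hl.2
      have : ((l - k : Fin n) : ℕ) ≠ 0 := fun h => h0 (Fin.ext h)
      exact ⟨by omega, (l - k).isLt⟩
    · intro m hm
      simp only [Finset.mem_Ico] at hm
      simp only [Finset.mem_sdiff, Finset.mem_univ, Finset.mem_singleton, true_and]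
      intro hcon
      have : (⟨m % n, Nat.mod_lt m hpos⟩ : Fin n) = 0 := by
        have := congrArg (fun x => x - k) hcon
        simpa using this
      have := congrArg Fin.val this
      simp only [Fin.val_zero] at this
      rw [Nat.mod_eq_of_lt hm.2] at this
      omega
    · intro l hl
      have h1 : (⟨((l - k : Fin n) : ℕ) % n, Nat.mod_lt _ hpos⟩ : Fin n) = l - k :=
        Fin.ext (Nat.mod_eq_of_lt (l - k).isLt)
      rw [h1]
      exact add_sub_cancel k l
    · intro m hm
      simp only [Finset.mem_Ico] at hm
      rw [add_sub_cancel_left]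
      exact Nat.mod_eq_of_lt hm.2
    · intro l hl
      simp only [Finset.mem_sdiff, Finset.mem_univ, Finset.mem_singleton] at hl
      set m : ℕ := ((l - k : Fin n) : ℕ) with hm
      have hm1 : 1 ≤ m := by
        have h0 : l - k ≠ 0 := sub_ne_zero.mpr hl.2
        have : m ≠ 0 := fun h => h0 (Fin.ext h)
        omega
      have hm2 : m < n := (l - k).isLt
      have hlval : (l : ℕ) = ((k : ℕ) + m) % n := by
        have : l = k + (l - k) := (add_sub_cancel k l).symm
        rw [this]
        rfl
      have hΓG : (Γ l : ℝ) = G ((k : ℕ) + m) := by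
        apply congrArg Γ
        exact Fin.ext (by rw [hlval])
      have hzl : z l = ρ ^ ((k : ℕ) + m) := by
        rw [hz l, hlval, hpow_mod]
      rw [hz k, hzl, hΓG, hconj, hconj]
      have hx : ρ ^ (k : ℕ) ≠ 0 := pow_ne_zero _ hρ0
      have hy : ρ ^ m ≠ 0 := pow_ne_zero _ hρ0
      have hd : ρ ^ m - 1 ≠ 0 := hne1 m hm1 hm2
      have hden : (ρ ^ (k : ℕ))⁻¹ - (ρ ^ ((k : ℕ) + m))⁻¹ =
          (ρ ^ m - 1) / ρ ^ ((k : ℕ) + m) := by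
        rw [pow_add]
        field_simp
      rw [hden, div_div_eq_mul_div, pow_add]
      field_simp
  -- Step 2: relative equilibrium relation
  have hkey : ∀ k : Fin n, ρ ^ (k : ℕ) * (S (k : ℕ) - (ω : ℂ)) = S 0 - (ω : ℂ) := by
    intro k
    have h := hre 0 k
    rw [hvS k, hvS 0, hz k, hz 0] at h
    simp only [Fin.val_zero, pow_zero, one_mul] at h
    have h2 : ρ ^ (k : ℕ) * S (k : ℕ) - S 0 = (ω : ℂ) * (ρ ^ (k : ℕ) - 1) := by
      apply mul_left_cancel₀ Complex.I_ne_zero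
      linear_combination h
    linear_combination h2
  have hSk : ∀ k, k < n → S k - (ω : ℂ) = ρ ^ (n - k) * (S 0 - (ω : ℂ)) := by
    intro k hk
    have h1 : ρ ^ (n - k) * ρ ^ k = 1 := hmul1 _ _ (by rw [Nat.sub_add_cancel (le_of_lt hk)])
    have h := hkey ⟨k, hk⟩
    simp only [Fin.val_mk] at h
    linear_combination ρ ^ (n - k) * h - (S k - (ω : ℂ)) * h1
  -- Step 3: DFT identity
  have idA : ∀ p, 1 ≤ p → p ≤ n →
      ∑ k ∈ Finset.range n, ρ ^ (k * p) * S k = gam p * Bsum n ρ (n + 1 - p) := by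
    intro p hp1 hpn
    have hFper : ∀ j, (G (j + n) : ℂ) * ρ ^ ((j + n) * p) = (G j : ℂ) * ρ ^ (j * p) := by
      intro j
      rw [hGper, add_mul, pow_add, show n * p = n * p from rfl, hone p, mul_one]
    have hinner : ∀ m, ∑ k ∈ Finset.range n, ρ ^ (k * p) * (G (k + m) : ℂ) =
        ρ ^ (m * (n - p)) * gam p := by
      intro m
      have h1 : ∀ k, ρ ^ (k * p) * (G (k + m) : ℂ) =
          ρ ^ (m * (n - p)) * ((G (k + m) : ℂ) * ρ ^ ((k + m) * p)) := by
        intro k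
        have he : m * (n - p) + (k + m) * p = k * p + m * n := by
          obtain ⟨r, hr⟩ := Nat.exists_eq_add_of_le hpn
          subst hr
          rw [show p + r - p = r by omega]
          ring
        have h2 : ρ ^ (m * (n - p)) * ρ ^ ((k + m) * p) = ρ ^ (k * p) := by
          rw [← pow_add, he, pow_add, show m * n = n * m by ring, hone m, mul_one]
        calc ρ ^ (k * p) * (G (k + m) : ℂ)
            = (ρ ^ (m * (n - p)) * ρ ^ ((k + m) * p)) * (G (k + m) : ℂ) := by rw [h2]
          _ = ρ ^ (m * (n - p)) * ((G (k + m) : ℂ) * ρ ^ ((k + m) * p)) := by ring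
      rw [Finset.sum_congr rfl (fun k _ => h1 k), ← Finset.mul_sum,
        sum_shift (fun j => (G j : ℂ) * ρ ^ (j * p)) hFper m]
    calc ∑ k ∈ Finset.range n, ρ ^ (k * p) * S k
        = ∑ k ∈ Finset.range n, ∑ m ∈ Finset.Ico 1 n,
            ρ ^ (k * p) * (G (k + m) : ℂ) * (ρ ^ m / (ρ ^ m - 1)) := by
          refine Finset.sum_congr rfl fun k _ => ?_
          rw [hSdef]
          simp only []
          rw [Finset.mul_sum]
          refine Finset.sum_congr rfl fun m _ => ?_
          ring
      _ = ∑ m ∈ Finset.Ico 1 n, ∑ k ∈ Finset.range n,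
            ρ ^ (k * p) * (G (k + m) : ℂ) * (ρ ^ m / (ρ ^ m - 1)) := Finset.sum_comm
      _ = ∑ m ∈ Finset.Ico 1 n, (∑ k ∈ Finset.range n,
            ρ ^ (k * p) * (G (k + m) : ℂ)) * (ρ ^ m / (ρ ^ m - 1)) := by
          refine Finset.sum_congr rfl fun m _ => ?_
          rw [Finset.sum_mul]
      _ = ∑ m ∈ Finset.Ico 1 n, gam p * (ρ ^ (m * (n + 1 - p)) / (ρ ^ m - 1)) := by
          refine Finset.sum_congr rfl fun m hm => ?_
          rw [hinner m]
          have he : m * (n - p) + m = m * (n + 1 - p) := by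
            obtain ⟨r, hr⟩ := Nat.exists_eq_add_of_le hpn
            subst hr
            rw [show p + r - p = r by omega, show p + r + 1 - p = r + 1 by omega]
            ring
          rw [← he, pow_add]
          ring
      _ = gam p * Bsum n ρ (n + 1 - p) := by
          rw [Bsum, Finset.mul_sum]
  have hsum : ∀ p, 1 ≤ p → p ≤ n →
      gam p * Bsum n ρ (n + 1 - p) =
        (S 0 - (ω : ℂ)) * (∑ k ∈ Finset.range n, ρ ^ (k * (p - 1))) +
          (ω : ℂ) * (∑ k ∈ Finset.range n, ρ ^ (k * p)) := by
    intro p hp1 hpn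
    rw [← idA p hp1 hpn, Finset.mul_sum, Finset.mul_sum, ← Finset.sum_add_distrib]
    refine Finset.sum_congr rfl fun k hk => ?_
    have hk' : k < n := Finset.mem_range.mp hk
    have h1 := hSk k hk'
    have hexp : k * p + (n - k) = k * (p - 1) + n := by
      obtain ⟨q, rfl⟩ := Nat.exists_eq_add_of_le hp1
      have e1 : k * (1 + q) = k + k * q := by ring
      have e2 : (1 + q) - 1 = q := by omega
      rw [e1, e2]
      omega
    have hpowfact : ρ ^ (k * p) * ρ ^ (n - k) = ρ ^ (k * (p - 1)) := by
      rw [← pow_add, hexp, pow_add, hρn, mul_one]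
    linear_combination ρ ^ (k * p) * h1 + (S 0 - (ω : ℂ)) * hpowfact
  have hndvd : ∀ q, 1 ≤ q → q < n → ¬ n ∣ q := by
    intro q h1 h2 h
    have := Nat.le_of_dvd (by omega) h
    omega
  have eqp : ∀ p, 2 ≤ p → p ≤ n - 1 → gam p * Bsum n ρ (n + 1 - p) = 0 := by
    intro p h2 h1
    rw [hsum p (by omega) (by omega), orth_sum hprim (p - 1), orth_sum hprim p,
      if_neg (hndvd (p - 1) (by omega) (by omega)), if_neg (hndvd p (by omega) (by omega))]
    ring
  have hγconj : ∀ p, p ≤ n → starRingEnd ℂ (gam p) = gam (n - p) := by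
    intro p hp
    rw [hgamdef]
    simp only [map_sum]
    refine Finset.sum_congr rfl fun j hj => ?_
    rw [map_mul, Complex.conj_ofReal, hconj (j * p)]
    congr 1
    refine inv_eq_of_mul_eq_one_right ?_
    refine hmul1 _ _ ⟨j, ?_⟩
    rw [← Nat.left_distrib, Nat.add_sub_cancel' hp, Nat.mul_comm]
  have hBne : ∀ q, 1 ≤ q → q ≤ n → 2 * q ≠ n + 1 → Bsum n ρ q ≠ 0 := by
    intro q h1 h2 h3 h
    rw [Bsum_val hprim (by omega) q h1 h2] at h
    have e1 : ((n + 1 : ℕ) : ℂ) = ((2 * q : ℕ) : ℂ) := by push_cast; linear_combination 2 * h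
    have := Nat.cast_injective (R := ℂ) e1
    omega
  have branch1 : ∀ p, 2 ≤ p → p ≤ n - 1 → 2 * p ≠ n + 1 → gam p = 0 := by
    intro p h2 h1 hne'
    rcases mul_eq_zero.mp (eqp p h2 h1) with h' | h'
    · exact h'
    · exact absurd h' (hBne (n + 1 - p) (by omega) (by omega) (by omega))
  have hγzero : ∀ p, 1 ≤ p → p < n → gam p = 0 := by
    intro p hp1 hpn
    rcases eq_or_ne p 1 with rfl | hnep
    · have hg := branch1 (n - 1) (by omega) (by omega) (by omega)
      have hc := hγconj (n - 1) (by omega)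
      rw [hg, map_zero, show n - (n - 1) = 1 by omega] at hc
      exact hc.symm
    · rcases eq_or_ne (2 * p) (n + 1) with h2p | h2p
      · have hg := branch1 (n - p) (by omega) (by omega) (by omega)
        have hc := hγconj (n - p) (by omega)
        rw [hg, map_zero, show n - (n - p) = p by omega] at hc
        exact hc.symm
      · exact branch1 p (by omega) (by omega) h2p
  have hGconst : ∀ j, j < n → (n : ℂ) * (G j : ℂ) = gam 0 := by
    intro j hj
    have key : ∑ p ∈ Finset.range n, gam p * ρ ^ ((n - j) * p) = (n : ℂ) * (G j : ℂ) := by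
      calc ∑ p ∈ Finset.range n, gam p * ρ ^ ((n - j) * p)
          = ∑ p ∈ Finset.range n, ∑ i ∈ Finset.range n,
              (G i : ℂ) * ρ ^ (p * (i + (n - j))) := by
            refine Finset.sum_congr rfl fun p _ => ?_
            rw [hgamdef]
            simp only []
            rw [Finset.sum_mul]
            refine Finset.sum_congr rfl fun i _ => ?_
            rw [mul_assoc, ← pow_add]
            congr 2
            ring
        _ = ∑ i ∈ Finset.range n, (G i : ℂ) *
              ∑ p ∈ Finset.range n, ρ ^ (p * (i + (n - j))) := by
            rw [Finset.sum_comm]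
            refine Finset.sum_congr rfl fun i _ => ?_
            rw [Finset.mul_sum]
        _ = ∑ i ∈ Finset.range n, (G i : ℂ) *
              (if n ∣ (i + (n - j)) then (n : ℂ) else 0) := by
            refine Finset.sum_congr rfl fun i _ => ?_
            rw [orth_sum hprim]
        _ = (n : ℂ) * (G j : ℂ) := by
            rw [Finset.sum_eq_single j]
            · rw [if_pos ⟨1, by omega⟩]
              ring
            · intro i hi hij
              have hi' : i < n := Finset.mem_range.mp hi
              rw [if_neg, mul_zero]
              intro ⟨c, hc⟩
              have hc0 : c ≠ 0 := by
                intro h0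
                rw [h0, Nat.mul_zero] at hc
                omega
              have hc2 : c < 2 := by
                by_contra hcc
                push_neg at hcc
                have : n * 2 ≤ n * c := Nat.mul_le_mul_left n hcc
                omega
              have : c = 1 := by omega
              rw [this, Nat.mul_one] at hc
              exact hij (by omega)
            · intro h
              exact absurd (Finset.mem_range.mpr hj) h
    have key2 : ∑ p ∈ Finset.range n, gam p * ρ ^ ((n - j) * p) = gam 0 := by
      rw [Finset.range_eq_Ico, Finset.sum_eq_sum_Ico_succ_bot hpos]
      have hz0 : ∑ p ∈ Finset.Ico 1 n, gam p * ρ ^ ((n - j) * p) = 0 := by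
        refine Finset.sum_eq_zero fun p hp => ?_
        simp only [Finset.mem_Ico] at hp
        rw [hγzero p hp.1 hp.2, zero_mul]
      rw [hz0, Nat.mul_zero, pow_zero, mul_one, add_zero]
    rw [← key, key2]
  have heq : ∀ k l : Fin n, Γ k = Γ l := by
    intro k l
    have hk := hGconst (k : ℕ) k.isLt
    have hl := hGconst (l : ℕ) l.isLt
    have hnc : (n : ℂ) ≠ 0 := Nat.cast_ne_zero.mpr hn0
    have hGC : (G (k : ℕ) : ℂ) = (G (l : ℕ) : ℂ) :=
      mul_left_cancel₀ hnc (hk.trans hl.symm)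
    have := Complex.ofReal_inj.mp hGC
    rw [hGΓ k, hGΓ l] at this
    exact this
  have hωeq : gam 0 * Bsum n ρ 1 = (n : ℂ) * (ω : ℂ) := by
    have hgn : gam n = gam 0 := by
      rw [hgamdef]
      simp only []
      refine Finset.sum_congr rfl fun j _ => ?_
      rw [show j * n = n * j by ring, hone j, Nat.mul_zero, pow_zero]
    have h := hsum n (by omega) le_rfl
    rw [show n + 1 - n = 1 by omega, orth_sum hprim (n - 1), orth_sum hprim n,
      if_neg (hndvd (n - 1) (by omega) (by omega)), if_pos dvd_rfl, hgn] at h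
    linear_combination h
  have hΓ0 : Γ ⟨0, hpos⟩ ≠ 0 := hΓ _
  have hωne : ω ≠ 0 := by
    intro h0
    rw [h0] at hωeq
    simp only [Complex.ofReal_zero, mul_zero] at hωeq
    rcases mul_eq_zero.mp hωeq with h' | h'
    · have hg0 : (n : ℂ) * (G 0 : ℂ) = gam 0 := hGconst 0 hpos
      rw [h'] at hg0
      rcases mul_eq_zero.mp hg0 with h'' | h''
      · exact Nat.cast_ne_zero.mpr hn0 h''
      · have : G 0 = 0 := Complex.ofReal_eq_zero.mp h''
        have h3 : Γ ⟨0, hpos⟩ = 0 := by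
          rw [← this]
          exact (congrArg Γ (Fin.ext (by simp))).symm
        exact hΓ0 h3
    · have := hBne 1 le_rfl (by omega) (by omega)
      exact this h'
  have hsumne : (∑ k, Γ k) ≠ 0 := by
    have hall : ∀ k : Fin n, Γ k = Γ ⟨0, hpos⟩ := fun k => heq k ⟨0, hpos⟩
    rw [Finset.sum_congr rfl (fun k _ => hall k), Finset.sum_const, Finset.card_univ,
      Fintype.card_fin, nsmul_eq_mul]
    exact mul_ne_zero (Nat.cast_ne_zero.mpr hn0) hΓ0
  exact ⟨heq, hsumne, hωne⟩
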